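/- Let G be a tdlc group and (π, H) a continuous unitary representation of G on a Hilbert space. Then π is topologically irreducible (has no proper nonzero closed invariant subspace) if and only if for every compact open subgroup K with H^K ≠ 0, the representation of the Hecke algebra H_K(G) on H^K is topologically irreducible. -/

import Mathlib

open scoped ComplexInnerProductSpace

/-- A (strongly continuous) unitary representation of a topological group `G`
on a complex Hilbert space. -/
structure UnitaryRep (G : Type*) [Group G] [TopologicalSpace G] where
  /-- the underlying Hilbert space -/
  carrier : Type
  [nacg : NormedAddCommGroup carrier]
  [ips : InnerProductSpace ℂ carrier]
  [cs : CompleteSpace carrier]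
  /-- the action by unitary operators -/
  ρ : G → carrier ≃ₗᵢ[ℂ] carrier
  map_one' : ∀ w : carrier, ρ 1 w = w
  map_mul' : ∀ (g h : G) (w : carrier), ρ (g * h) w = ρ g (ρ h w)
  continuous_orbit : ∀ w : carrier, Continuous fun g => ρ g w

attribute [instance] UnitaryRep.nacg UnitaryRep.ips UnitaryRep.cs

open MeasureTheory

namespace UnitaryRep

variable {G : Type*} [Group G] [TopologicalSpace G]

/-- The matrix coefficient `g ↦ ⟪π(g)u, v⟫` of a unitary representation. -/
noncomputable def mc (π : UnitaryRep G) (u v : π.carrier) : G → ℂ := fun g => ⟪π.ρ g u, v⟫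

/-- Weak containment `π' ≺ π`: every matrix coefficient of `π'` is approximated,
uniformly on compact sets, by finite sums of matrix coefficients of `π`. -/
def WeakContained (π' π : UnitaryRep G) : Prop :=
  ∀ (u v : π'.carrier) (C : Set G), IsCompact C → ∀ ε > (0 : ℝ),
    ∃ (n : ℕ) (a b : Fin n → π.carrier),
      ∀ g ∈ C, ‖π'.mc u v g - ∑ i, π.mc (a i) (b i) g‖ ≤ ε

/-- Weak containment of a representation in a set of representations. -/
def WeakContainedIn (π' : UnitaryRep G) (S : Set (UnitaryRep G)) : Prop :=
  ∀ (u v : π'.carrier) (C : Set G), IsCompact C → ∀ ε > (0 : ℝ),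
    ∃ (n : ℕ) (σ : Fin n → UnitaryRep G), (∀ i, σ i ∈ S) ∧
      ∃ (a : (i : Fin n) → (σ i).carrier) (b : (i : Fin n) → (σ i).carrier),
        ∀ g ∈ C, ‖π'.mc u v g - ∑ i, (σ i).mc (a i) (b i) g‖ ≤ ε

/-- Topological irreducibility (together with nontriviality). -/
def IsIrreducible (π : UnitaryRep G) : Prop :=
  (∃ w : π.carrier, w ≠ 0) ∧
    ∀ W : Submodule ℂ π.carrier, IsClosed (W : Set π.carrier) →
      (∀ g, ∀ w ∈ W, π.ρ g w ∈ W) → W = ⊥ ∨ W = ⊤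

/-- The support of a unitary representation: all irreducible representations
weakly contained in it. -/
def supp (π : UnitaryRep G) : Set (UnitaryRep G) :=
  {σ | σ.IsIrreducible ∧ σ.WeakContained π}

/-- A set of irreducible representations is Fell-closed if it contains every
irreducible representation weakly contained in it. -/
def FellClosed (S : Set (UnitaryRep G)) : Prop :=
  ∀ σ : UnitaryRep G, σ.IsIrreducible → σ.WeakContainedIn S → σ ∈ S

/-- The trivial (one-dimensional) representation. -/
noncomputable def trivialRep (G : Type*) [Group G] [TopologicalSpace G] : UnitaryRep G where
  carrier := ℂ
  ρ _ := LinearIsometryEquiv.refl ℂ ℂ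
  map_one' _ := rfl
  map_mul' _ _ _ := rfl
  continuous_orbit _ := continuous_const

/-- `τ` is a realization of the Hilbertian tensor product `π₁ ⊗ π₂`. -/
def IsTensorRep (π₁ π₂ τ : UnitaryRep G) : Prop :=
  ∃ t : π₁.carrier → π₂.carrier → τ.carrier,
    (∀ u v u' v', ⟪t u v, t u' v'⟫ = ⟪u, u'⟫ * ⟪v, v'⟫) ∧
    (∀ g u v, τ.ρ g (t u v) = t (π₁.ρ g u) (π₂.ρ g v)) ∧
    Dense (Submodule.span ℂ {w : τ.carrier | ∃ u v, w = t u v} : Set τ.carrier)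

/-- Unitary equivalence of representations. -/
def UnitaryEquiv (π σ : UnitaryRep G) : Prop :=
  ∃ e : π.carrier ≃ₗᵢ[ℂ] σ.carrier, ∀ g w, e (π.ρ g w) = σ.ρ g (e w)

/-- `πb` is a realization of the conjugate (contragredient) representation of `π`. -/
def IsConjugateRep (π πb : UnitaryRep G) : Prop :=
  ∃ c : π.carrier → πb.carrier, Function.Bijective c ∧
    (∀ u v, c (u + v) = c u + c v) ∧
    (∀ (a : ℂ) (u : π.carrier), c (a • u) = (starRingEnd ℂ) a • c u) ∧
    (∀ u v, ⟪c u, c v⟫ = (starRingEnd ℂ) ⟪u, v⟫) ∧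
    (∀ g u, πb.ρ g (c u) = c (π.ρ g u))

/-- Restriction of a representation to a subgroup. -/
noncomputable def res (π : UnitaryRep G) (Γ : Subgroup G) : UnitaryRep Γ where
  carrier := π.carrier
  ρ γ := π.ρ γ
  map_one' w := π.map_one' w
  map_mul' g h w := π.map_mul' g h w
  continuous_orbit w := (π.continuous_orbit w).comp continuous_subtype_val

/-- Membership in `Ĝ_p`: an irreducible representation with a dense subspace of
vectors whose matrix coefficients lie in `L^{p+ε}(G)` for every `ε > 0`. -/
def MemGhat [MeasurableSpace G] (π : UnitaryRep G) (p : ℝ) (μ : Measure G) : Prop :=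
  π.IsIrreducible ∧
    ∃ H₀ : Submodule ℂ π.carrier, Dense (H₀ : Set π.carrier) ∧
      ∀ u ∈ H₀, ∀ v ∈ H₀, ∀ ε > (0 : ℝ),
        MemLp (π.mc u v) (ENNReal.ofReal (p + ε)) μ

end UnitaryRep


/-- The Hecke algebra `H_K(G)` of compactly supported `K`-bi-invariant functions,
as a set of functions. -/
def heckeSet {G : Type*} [Group G] [TopologicalSpace G] (K : Subgroup G) : Set (G → ℂ) :=
  {f | HasCompactSupport f ∧ ∀ k₁ ∈ K, ∀ k₂ ∈ K, ∀ g : G, f (k₁ * g * k₂) = f g}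

/-- The submodule of `K`-invariant vectors of a unitary representation. -/
def fixedSubU {G : Type*} [Group G] [TopologicalSpace G] (π : UnitaryRep G)
    (K : Subgroup G) : Submodule ℂ π.carrier where
  carrier := {v | ∀ k ∈ K, π.ρ k v = v}
  add_mem' := by
    intro a b ha hb k hk
    simp [map_add, ha k hk, hb k hk]
  zero_mem' := by
    intro k hk
    simp
  smul_mem' := by
    intro c v hv k hk
    simp [_root_.map_smul, hv k hk]

/-- The action of a compactly supported `K`-bi-invariant function on a `K`-invariant
vector of a unitary representation, as a finite sum over the cosets `G ⧸ K`. -/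
noncomputable def heckeActU {G : Type*} [Group G] [TopologicalSpace G]
    (π : UnitaryRep G) (K : Subgroup G) (f : G → ℂ) (v : π.carrier) : π.carrier :=
  ∑ᶠ c : G ⧸ K, f (Quotient.out c) • π.ρ (Quotient.out c) v

/-! For `v, w ∈ H^K` the Hecke operator of a double coset `KgK` satisfies
`⟪T_{KgK} v, w⟫ = |KgK/K| ⟪π(g) v, w⟫`. Hence a vector of `H^K` orthogonal to a closed
Hecke-invariant `W ⊆ H^K` is orthogonal to `π(G) W`, and irreducibility of `π` forces it to vanish.

Conversely, if `W` is a proper nonzero closed invariant subspace, pick nonzero `v ∈ W` and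
`u ∈ Wᗮ` and (van Dantzig) a compact open subgroup `K` moving both by less than half their norm.
The point of least norm in the closed convex hull of a `K`-orbit is `K`-fixed and nonzero, so
`W ∩ H^K` is a closed Hecke-invariant subspace of `H^K` that is neither `0` nor all of `H^K`. -/

open Set Filter Topology
open scoped Pointwise

theorem Convex.exists_mem_forall_apply_eq_of_norm_preserving {E ι : Type*}
    [NormedAddCommGroup E] [InnerProductSpace ℝ E] {C : Set E} (hne : C.Nonempty)
    (hcomplete : IsComplete C) (hconv : Convex ℝ C) (T : ι → E → E)
    (hmaps : ∀ i, MapsTo (T i) C C) (hnorm : ∀ i, ∀ x ∈ C, ‖T i x‖ = ‖x‖) :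
    ∃ m ∈ C, ∀ i, T i m = m := by
  obtain ⟨m, hmC, hm⟩ := exists_norm_eq_iInf_of_complete_convex hne hcomplete hconv 0
  have hmin : ∀ x ∈ C, ‖m‖ ≤ ‖x‖ := fun x hx => by
    have := ciInf_le (f := fun w : C => ‖0 - (w : E)‖)
      ⟨0, by rintro _ ⟨w, rfl⟩; positivity⟩ ⟨x, hx⟩
    rwa [← hm, zero_sub, norm_neg, zero_sub, norm_neg] at this
  refine ⟨m, hmC, fun i => by_contra fun hne => ?_⟩
  -- strict convexity: the midpoint of `T i m ≠ m`, both of norm `‖m‖`, would be shorter than `m`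
  have hlt := norm_combo_lt_of_ne (hnorm i m hmC).le le_rfl hne one_half_pos one_half_pos
    (add_halves 1)
  exact hlt.not_ge (hmin _ (hconv (hmaps i hmC) hmC one_half_pos.le one_half_pos.le
    (add_halves 1)))

theorem exists_isOpen_isCompact_subgroup_subset {G : Type*} [Group G] [TopologicalSpace G]
    [IsTopologicalGroup G] [LocallyCompactSpace G] [TotallyDisconnectedSpace G] {U : Set G}
    (hU : U ∈ 𝓝 1) :
    ∃ K : Subgroup G, IsOpen (K : Set G) ∧ IsCompact (K : Set G) ∧ (K : Set G) ⊆ U := by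
  obtain ⟨s, hs, hsU, hsc⟩ := local_compact_nhds hU
  obtain ⟨V, hV, h1V, hVs⟩ := loc_compact_Haus_tot_disc_of_zero_dim.mem_nhds_iff.mp hs
  have hVc : IsCompact V := hsc.of_isClosed_subset hV.isClosed hVs
  obtain ⟨T, hT, hTV⟩ := compact_open_separated_mul_left hVc hV.isOpen subset_rfl
  -- the stabiliser of `V` under left translation is open, and lies in `V` since `1 ∈ V`
  set K := MulAction.stabilizer G V
  have hsmul : ∀ g ∈ T, g • V ⊆ V := fun g hg =>
    (Set.smul_set_subset_mul hg).trans hTV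
  have hKo : IsOpen (K : Set G) := by
    refine K.isOpen_of_mem_nhds (g := 1) (mem_of_superset (inter_mem hT (inv_mem_nhds_one G hT))
      fun g hg => ?_)
    exact (hsmul g hg.1).antisymm (Set.subset_smul_set_iff.mpr (hsmul g⁻¹ hg.2))
  have hKV : (K : Set G) ⊆ V := fun g hg => by
    simpa [MulAction.mem_stabilizer_iff.mp hg] using Set.smul_mem_smul_set (a := g) h1V
  exact ⟨K, hKo, hVc.of_isClosed_subset (K.isClosed_of_isOpen hKo) hKV, hKV.trans (hVs.trans hsU)⟩

namespace UnitaryRep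

variable {G : Type*} [Group G] [TopologicalSpace G] (π : UnitaryRep G)

def IsInvariant (W : Submodule ℂ π.carrier) : Prop :=
  ∀ g : G, ∀ v ∈ W, π.ρ g v ∈ W

def IsTopologicallyIrreducible : Prop :=
  ∀ W : Submodule ℂ π.carrier, IsClosed (W : Set π.carrier) → π.IsInvariant W → W = ⊥ ∨ W = ⊤

def IsHeckeInvariant (K : Subgroup G) (W : Submodule ℂ π.carrier) : Prop :=
  ∀ f ∈ heckeSet K, ∀ v ∈ W, heckeActU π K f v ∈ W

def IsHeckeIrreducible (K : Subgroup G) : Prop :=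
  ∀ W : Submodule ℂ π.carrier, W ≤ fixedSubU π K → IsClosed (W : Set π.carrier) →
    π.IsHeckeInvariant K W → W = ⊥ ∨ W = fixedSubU π K

variable {π}

theorem ρ_ρ_inv (g : G) (w : π.carrier) : π.ρ g (π.ρ g⁻¹ w) = w := by
  rw [← π.map_mul', mul_inv_cancel, π.map_one']

theorem inner_ρ_right (g : G) (v w : π.carrier) : ⟪v, π.ρ g w⟫ = ⟪π.ρ g⁻¹ v, w⟫ := by
  conv_lhs => rw [← ρ_ρ_inv g v]
  exact (π.ρ g).inner_map_map _ w

theorem IsInvariant.orthogonal {W : Submodule ℂ π.carrier} (hW : π.IsInvariant W) :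
    π.IsInvariant Wᗮ := fun g v hv w hw => by
  rw [inner_ρ_right, Submodule.inner_right_of_mem_orthogonal (hW _ w hw) hv]

theorem isInvariant_span_range_ρ (u : π.carrier) :
    π.IsInvariant (Submodule.span ℂ (range fun g => π.ρ g u)) := fun g v hv => by
  refine Submodule.span_induction ?_ (by simp) (fun x y _ _ hx hy => by simpa using add_mem hx hy)
    (fun a x _ hx => by simpa using Submodule.smul_mem _ a hx) hv
  rintro _ ⟨h, rfl⟩
  exact Submodule.subset_span ⟨g * h, π.map_mul' g h u⟩

theorem isClosed_fixedSubU (K : Subgroup G) :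
    IsClosed (fixedSubU π K : Set π.carrier) := by
  have : (fixedSubU π K : Set π.carrier) = ⋂ k ∈ K, {v | π.ρ k v = v} := by
    ext; simp [fixedSubU]
  rw [this]
  exact isClosed_biInter fun k _ => isClosed_eq (π.ρ k).continuous continuous_id

theorem inner_ρ_mem_fixedSubU {K : Subgroup G} {k : G} (hk : k ∈ K) (v : π.carrier)
    {w : π.carrier} (hw : w ∈ fixedSubU π K) : ⟪π.ρ k v, w⟫ = ⟪v, w⟫ := by
  rw [← (π.ρ k).inner_map_map v w, hw k hk]

open DoubleCoset

theorem isCompact_doubleCoset [IsTopologicalGroup G] {K : Subgroup G}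
    (hK : IsCompact (K : Set G)) (g : G) : IsCompact (doubleCoset g K K) :=
  (hK.mul isCompact_singleton).mul hK

theorem heckeActU_mem_of_isInvariant {W : Submodule ℂ π.carrier} (hW : π.IsInvariant W)
    (K : Subgroup G) (f : G → ℂ) {v : π.carrier} (hv : v ∈ W) : heckeActU π K f v ∈ W :=
  finsum_induction (· ∈ W) W.zero_mem (fun _ _ => W.add_mem) fun _ => W.smul_mem _ (hW _ _ hv)

theorem heckeActU_mem_fixedSubU {K : Subgroup G} {f : G → ℂ}
    (hf : ∀ k₁ ∈ K, ∀ k₂ ∈ K, ∀ g : G, f (k₁ * g * k₂) = f g) {v : π.carrier}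
    (hv : v ∈ fixedSubU π K) : heckeActU π K f v ∈ fixedSubU π K := by
  intro k hk
  set F : G ⧸ K → π.carrier := fun c => f c.out • π.ρ c.out v
  have hF : ∀ c, F (k • c) = π.ρ k (F c) := fun c => by
    obtain ⟨κ, hκ⟩ := QuotientGroup.mk_out_eq_mul K (k * c.out)
    rw [← smul_eq_mul, ← MulAction.Quotient.smul_mk, QuotientGroup.out_eq'] at hκ
    simp only [F, hκ, smul_eq_mul, hf k hk κ κ.2, π.map_mul', hv κ κ.2, map_smul]
  calc π.ρ k (∑ᶠ c, F c) = ∑ᶠ c, F (MulAction.toPerm k c) := by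
        rw [AddEquivClass.map_finsum]; exact finsum_congr fun c => (hF c).symm
    _ = ∑ᶠ c, F c := finsum_comp_equiv _

theorem indicator_doubleCoset_mem_heckeSet [IsTopologicalGroup G] [T2Space G]
    {K : Subgroup G} (hK : IsCompact (K : Set G)) (g : G) :
    (doubleCoset g K K).indicator 1 ∈ heckeSet K := by
  refine ⟨HasCompactSupport.intro (isCompact_doubleCoset hK g)
    fun x hx => indicator_of_notMem hx _, fun k₁ hk₁ k₂ hk₂ x => ?_⟩
  have hmem : ∀ y, y ∈ doubleCoset g K K ↔ doubleCoset y K K = doubleCoset g K K :=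
    fun y => ⟨doubleCoset_eq_of_mem, fun h => h ▸ mem_doubleCoset_self K K y⟩
  have hx : doubleCoset (k₁ * x * k₂) K K = doubleCoset x K K :=
    doubleCoset_eq_of_mem (mem_doubleCoset.mpr ⟨k₁, hk₁, k₂, hk₂, rfl⟩)
  simp only [Set.indicator, hmem, hx, Pi.one_apply]

theorem inner_ρ_of_mem_doubleCoset {K : Subgroup G} {g h : G} (hh : h ∈ doubleCoset g K K)
    {v w : π.carrier} (hv : v ∈ fixedSubU π K) (hw : w ∈ fixedSubU π K) :
    ⟪π.ρ h v, w⟫ = ⟪π.ρ g v, w⟫ := by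
  obtain ⟨k₁, hk₁, k₂, hk₂, rfl⟩ := mem_doubleCoset.mp hh
  rw [π.map_mul', π.map_mul', hv k₂ hk₂, inner_ρ_mem_fixedSubU hk₁ _ hw]

theorem finite_setOf_out_mem [IsTopologicalGroup G] {K : Subgroup G} (hK : IsOpen (K : Set G))
    {S : Set G} (hS : IsCompact S) : {c : G ⧸ K | c.out ∈ S}.Finite :=
  have := QuotientGroup.discreteTopology hK
  (hS.image QuotientGroup.continuous_mk).finite_of_discrete.subset
    fun c hc => ⟨c.out, hc, QuotientGroup.out_eq' c⟩

theorem inner_heckeActU_indicator_doubleCoset [IsTopologicalGroup G] {K : Subgroup G}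
    (hKo : IsOpen (K : Set G)) (hKc : IsCompact (K : Set G)) {v w : π.carrier}
    (hv : v ∈ fixedSubU π K) (hw : w ∈ fixedSubU π K) (g : G) :
    ⟪heckeActU π K ((doubleCoset g K K).indicator 1) v, w⟫ =
      {c : G ⧸ K | c.out ∈ doubleCoset g K K}.ncard * ⟪π.ρ g v, w⟫ := by
  set S := {c : G ⧸ K | c.out ∈ doubleCoset g K K}
  have hS : S.Finite := finite_setOf_out_mem hKo (isCompact_doubleCoset hKc g)
  have hsum : heckeActU π K ((doubleCoset g K K).indicator 1) v = ∑ᶠ c ∈ S, π.ρ c.out v := by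
    rw [finsum_mem_def]
    refine finsum_congr fun c => ?_
    by_cases hc : c.out ∈ doubleCoset g K K <;> simp [S, hc]
  rw [hsum, finsum_mem_eq_finite_toFinset_sum _ hS, sum_inner,
    Finset.sum_congr rfl fun c hc => inner_ρ_of_mem_doubleCoset (hS.mem_toFinset.mp hc) hv hw,
    Finset.sum_const, ← Set.ncard_eq_toFinset_card _ hS, nsmul_eq_mul]

theorem ncard_setOf_out_mem_doubleCoset_pos [IsTopologicalGroup G] {K : Subgroup G}
    (hKo : IsOpen (K : Set G)) (hKc : IsCompact (K : Set G)) (g : G) :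
    0 < {c : G ⧸ K | c.out ∈ doubleCoset g K K}.ncard := by
  refine (Set.ncard_pos (finite_setOf_out_mem hKo (isCompact_doubleCoset hKc g))).mpr
    ⟨(g : G ⧸ K), ?_⟩
  obtain ⟨κ, hκ⟩ := QuotientGroup.mk_out_eq_mul K g
  exact mem_doubleCoset.mpr ⟨1, K.one_mem, κ, κ.2, by rw [hκ, one_mul]⟩

theorem ρ_mem_orthogonal_of_isHeckeInvariant [IsTopologicalGroup G] [T2Space G]
    {K : Subgroup G} (hKo : IsOpen (K : Set G)) (hKc : IsCompact (K : Set G))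
    {W : Submodule ℂ π.carrier} (hWK : W ≤ fixedSubU π K) (hW : π.IsHeckeInvariant K W)
    {u : π.carrier} (hu : u ∈ Wᗮ ⊓ fixedSubU π K) (g : G) : π.ρ g u ∈ Wᗮ := by
  refine (Submodule.mem_orthogonal _ _).mpr fun w hw => ?_
  have h := inner_heckeActU_indicator_doubleCoset hKo hKc (hWK hw) hu.2 g⁻¹
  rw [Submodule.inner_right_of_mem_orthogonal
    (hW _ (indicator_doubleCoset_mem_heckeSet hKc g⁻¹) w hw) hu.1] at h
  rw [inner_ρ_right]
  exact (mul_eq_zero.mp h.symm).resolve_left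
    (Nat.cast_ne_zero.mpr (ncard_setOf_out_mem_doubleCoset_pos hKo hKc g⁻¹).ne')

theorem IsTopologicallyIrreducible.isHeckeIrreducible [IsTopologicalGroup G] [T2Space G]
    (hπ : π.IsTopologicallyIrreducible) {K : Subgroup G} (hKo : IsOpen (K : Set G))
    (hKc : IsCompact (K : Set G)) : π.IsHeckeIrreducible K := by
  intro W hWK hWc hW
  refine or_iff_not_imp_left.mpr fun hWne => by_contra fun hWK' => ?_
  have := hWc.completeSpace_coe
  obtain ⟨u, hu, hu0⟩ := Submodule.exists_mem_ne_zero_of_ne_bot fun h : Wᗮ ⊓ fixedSubU π K = ⊥ =>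
    hWK' (by simpa [h] using Submodule.sup_orthogonal_inf_of_hasOrthogonalProjection hWK)
  set U := Submodule.span ℂ (range fun g => π.ρ g u)
  have hWU : W ≤ Uᗮ := W.le_orthogonal_orthogonal.trans (Submodule.orthogonal_le
    (Submodule.span_le.mpr (range_subset_iff.mpr
      (ρ_mem_orthogonal_of_isHeckeInvariant hKo hKc hWK hW hu))))
  have hU : Uᗮ = ⊤ := (hπ _ (Submodule.isClosed_orthogonal U)
    (isInvariant_span_range_ρ u).orthogonal).resolve_left (ne_bot_of_le_ne_bot hWne hWU)
  have huU : u ∈ U ⊓ Uᗮ := ⟨Submodule.subset_span ⟨1, π.map_one' u⟩, hU ▸ Submodule.mem_top⟩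
  rw [U.inf_orthogonal_eq_bot] at huU
  exact hu0 huU

theorem exists_mem_closedConvexHull_orbit_fixedSubU (K : Subgroup G) (v : π.carrier) :
    ∃ m ∈ closedConvexHull ℝ (range fun k : K => π.ρ k v), m ∈ fixedSubU π K := by
  let : InnerProductSpace ℝ π.carrier := InnerProductSpace.complexToReal
  set C := closedConvexHull ℝ (range fun k : K => π.ρ k v)
  have hmaps : ∀ k : K, MapsTo (π.ρ k) C C := fun k => by
    refine closedConvexHull_min ?_ (convex_closedConvexHull.is_linear_preimage
      ((π.ρ k).toLinearEquiv.toLinearMap.restrictScalars ℝ).isLinear)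
      (isClosed_closedConvexHull.preimage (π.ρ k).continuous)
    rintro _ ⟨k', rfl⟩
    exact subset_closedConvexHull ⟨k * k', π.map_mul' k k' v⟩
  obtain ⟨m, hm, hfix⟩ := Convex.exists_mem_forall_apply_eq_of_norm_preserving (C := C)
    ⟨v, subset_closedConvexHull ⟨1, π.map_one' v⟩⟩ isClosed_closedConvexHull.isComplete
    convex_closedConvexHull (fun k : K => π.ρ k) hmaps fun k x _ => (π.ρ k).norm_map x
  exact ⟨m, hm, fun k hk => hfix ⟨k, hk⟩⟩

theorem inf_fixedSubU_ne_bot {W : Submodule ℂ π.carrier} (hWc : IsClosed (W : Set π.carrier))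
    (hW : π.IsInvariant W) {v : π.carrier} (hvW : v ∈ W) {K : Subgroup G} {r : ℝ}
    (hr : r < ‖v‖) (hK : ∀ k ∈ K, ‖π.ρ k v - v‖ ≤ r) : W ⊓ fixedSubU π K ≠ ⊥ := by
  obtain ⟨m, hmC, hmK⟩ := exists_mem_closedConvexHull_orbit_fixedSubU K v
  have hCW := closedConvexHull_min (range_subset_iff.mpr fun k : K => hW k v hvW)
    (W.restrictScalars ℝ).convex hWc
  have hCball := closedConvexHull_min (range_subset_iff.mpr fun k : K => by
    simpa [dist_eq_norm] using hK k k.2) (convex_closedBall v r) Metric.isClosed_closedBall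
  refine (Submodule.ne_bot_iff _).mpr ⟨m, ⟨hCW hmC, hmK⟩, fun hm0 => ?_⟩
  have := hCball hmC
  rw [hm0, Metric.mem_closedBall, dist_zero_left] at this
  linarith

theorem setOf_norm_ρ_sub_lt_mem_nhds_one (v : π.carrier) {ε : ℝ} (hε : 0 < ε) :
    {g : G | ‖π.ρ g v - v‖ < ε} ∈ 𝓝 (1 : G) :=
  (isOpen_lt ((π.continuous_orbit v).sub continuous_const).norm continuous_const).mem_nhds
    (by simpa [π.map_one'] using hε)

theorem isTopologicallyIrreducible_of_isHeckeIrreducible [IsTopologicalGroup G]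
    [LocallyCompactSpace G] [TotallyDisconnectedSpace G]
    (hH : ∀ K : Subgroup G, IsOpen (K : Set G) → IsCompact (K : Set G) →
      fixedSubU π K ≠ ⊥ → π.IsHeckeIrreducible K) :
    π.IsTopologicallyIrreducible := by
  intro W hWc hW
  refine or_iff_not_imp_left.mpr fun hWne => by_contra fun hWtop => ?_
  have := hWc.completeSpace_coe
  obtain ⟨v, hvW, hv⟩ := W.exists_mem_ne_zero_of_ne_bot hWne
  obtain ⟨u, huW, hu⟩ := Wᗮ.exists_mem_ne_zero_of_ne_bot
    fun h => hWtop (Submodule.orthogonal_eq_bot_iff.mp h)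
  have hv' := norm_pos_iff.mpr hv
  have hu' := norm_pos_iff.mpr hu
  obtain ⟨K, hKo, hKc, hKU⟩ := exists_isOpen_isCompact_subgroup_subset
    (inter_mem (setOf_norm_ρ_sub_lt_mem_nhds_one v (half_pos hv'))
      (setOf_norm_ρ_sub_lt_mem_nhds_one u (half_pos hu')))
  have hWK := inf_fixedSubU_ne_bot hWc hW hvW (half_lt_self hv') fun k hk => (hKU hk).1.le
  have hWK' := inf_fixedSubU_ne_bot (Submodule.isClosed_orthogonal W) hW.orthogonal huW
    (half_lt_self hu') fun k hk => (hKU hk).2.le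
  have hHecke : π.IsHeckeInvariant K (W ⊓ fixedSubU π K) := fun f hf v hv =>
    ⟨heckeActU_mem_of_isInvariant hW K f hv.1, heckeActU_mem_fixedSubU hf.2 hv.2⟩
  rcases hH K hKo hKc (ne_bot_of_le_ne_bot hWK inf_le_right) _ inf_le_right
    (hWc.inter (isClosed_fixedSubU K)) hHecke with h | h
  · exact hWK h
  · refine hWK' (eq_bot_iff.mpr ?_)
    rw [← W.inf_orthogonal_eq_bot]
    exact le_inf (inf_le_right.trans (h.ge.trans inf_le_left)) inf_le_left

end UnitaryRep

theorem unitary_irreducible_iff_hecke_irreducible_general {G : Type*} [Group G]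
    [TopologicalSpace G] [IsTopologicalGroup G] [LocallyCompactSpace G]
    [TotallyDisconnectedSpace G]
    (π : UnitaryRep G) :
    (∀ W : Submodule ℂ π.carrier, IsClosed (W : Set π.carrier) →
      (∀ g : G, ∀ v ∈ W, π.ρ g v ∈ W) → W = ⊥ ∨ W = ⊤) ↔
    (∀ K : Subgroup G, IsOpen (K : Set G) → IsCompact (K : Set G) →
      fixedSubU π K ≠ ⊥ →
      ∀ W : Submodule ℂ π.carrier, W ≤ fixedSubU π K →
        IsClosed (W : Set π.carrier) →
        (∀ f ∈ heckeSet K, ∀ v ∈ W, heckeActU π K f v ∈ W) →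
        W = ⊥ ∨ W = fixedSubU π K) :=
  ⟨fun hπ _ hKo hKc _ => UnitaryRep.IsTopologicallyIrreducible.isHeckeIrreducible hπ hKo hKc,
    UnitaryRep.isTopologicallyIrreducible_of_isHeckeIrreducible⟩

/-- A continuous unitary representation of a tdlc group is
topologically irreducible iff for every compact open subgroup `K` with `H^K ≠ 0`,
the `H_K(G)`-representation on `H^K` is topologically irreducible. -/
theorem unitary_irreducible_iff_hecke_irreducible {G : Type*} [Group G]
    [TopologicalSpace G] [IsTopologicalGroup G] [LocallyCompactSpace G]
    [TotallyDisconnectedSpace G]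
    (π : UnitaryRep G) (hnt : ∃ v : π.carrier, v ≠ 0) :
    (∀ W : Submodule ℂ π.carrier, IsClosed (W : Set π.carrier) →
      (∀ g : G, ∀ v ∈ W, π.ρ g v ∈ W) → W = ⊥ ∨ W = ⊤) ↔
    (∀ K : Subgroup G, IsOpen (K : Set G) → IsCompact (K : Set G) →
      fixedSubU π K ≠ ⊥ →
      ∀ W : Submodule ℂ π.carrier, W ≤ fixedSubU π K →
        IsClosed (W : Set π.carrier) →
        (∀ f ∈ heckeSet K, ∀ v ∈ W, heckeActU π K f v ∈ W) →
        W = ⊥ ∨ W = fixedSubU π K) :=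
  unitary_irreducible_iff_hecke_irreducible_general π
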